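/- Let G = {1, σ} be a group of order 2 acting on the Klein four-group V = {1, a, b, c} by σ·a = a, σ·b = c, σ·c = b. Then H^1(G, V) = 0. -/

import Mathlib

/-- The nontrivial automorphism of the Klein four group `V = ℤ/2 × ℤ/2` fixing
`a = (1,0)` and swapping `b = (0,1)` and `c = (1,1)`. -/
def kleinSigma : ZMod 2 × ZMod 2 → ZMod 2 × ZMod 2 :=
  fun v => (v.1 + v.2, v.2)

/-- The action of `G = ℤ/2` on the Klein four group: the identity acts trivially
and the nontrivial element acts by `kleinSigma`. -/
def kleinAct : ZMod 2 → ZMod 2 × ZMod 2 → ZMod 2 × ZMod 2 :=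
  fun g v => if g = 0 then v else kleinSigma v

/-! For `G = ℤ/2` with generator `σ`, a crossed homomorphism is determined by `f σ`, which
must satisfy `σ (f σ) + f σ = 0`; it is principal as soon as `f σ = σ v - v` for some `v`.
For the Klein four group, `σ w + w = (w.2, 0)`, so the condition forces `w = (w.1, 0)`,
which is `σ (0, w.1) - (0, w.1)`. -/

section CrossedHom

variable {V : Type*} [AddCommGroup V] {act : ZMod 2 → V → V} {f : ZMod 2 → V}

theorem crossedHom_apply_zero (hact : ∀ v, act 0 v = v)
    (hf : ∀ g h : ZMod 2, f (g + h) = act g (f h) + f g) : f 0 = 0 := by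
  have h := hf 0 0
  rwa [add_zero, hact, left_eq_add] at h

theorem act_one_crossedHom_one_add_self_eq_zero (hact : ∀ v, act 0 v = v)
    (hf : ∀ g h : ZMod 2, f (g + h) = act g (f h) + f g) : act 1 (f 1) + f 1 = 0 := by
  have h := hf 1 1
  rwa [show (1 + 1 : ZMod 2) = 0 from rfl, crossedHom_apply_zero hact hf, eq_comm] at h

theorem crossedHom_eq_act_sub_of_apply_one (hact : ∀ v, act 0 v = v) (h0 : f 0 = 0) {v : V}
    (hv : f 1 = act 1 v - v) (g : ZMod 2) : f g = act g v - v := by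
  fin_cases g
  · show f 0 = act 0 v - v
    rw [h0, hact, sub_self]
  · exact hv

end CrossedHom

theorem exists_kleinSigma_sub_eq_of_kleinSigma_add_self_eq_zero {w : ZMod 2 × ZMod 2}
    (hw : kleinSigma w + w = 0) : ∃ v, w = kleinSigma v - v := by
  obtain ⟨x, y⟩ := w
  have hy : y = 0 := by
    have h := congrArg Prod.fst hw
    simp only [kleinSigma, Prod.fst_add, Prod.fst_zero] at h
    rwa [add_right_comm, CharTwo.add_self_eq_zero, zero_add] at h
  exact ⟨(0, x), by simp [kleinSigma, hy]⟩

/-- For `G` of order 2 acting on the Klein four group `V` by fixing `a` and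
swapping `b` and `c`, `H¹(G, V) = 0`: every crossed homomorphism is principal. -/
theorem h1_klein_swap_action_trivial
    (f : ZMod 2 → ZMod 2 × ZMod 2)
    (hf : ∀ g h : ZMod 2, f (g + h) = kleinAct g (f h) + f g) :
    ∃ v : ZMod 2 × ZMod 2, ∀ g : ZMod 2, f g = kleinAct g v - v := by
  have hact : ∀ v, kleinAct 0 v = v := fun v => if_pos rfl
  have hσ : ∀ v, kleinAct 1 v = kleinSigma v := fun v => if_neg one_ne_zero
  obtain ⟨v, hv⟩ := exists_kleinSigma_sub_eq_of_kleinSigma_add_self_eq_zero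
    (hσ (f 1) ▸ act_one_crossedHom_one_add_self_eq_zero hact hf)
  exact ⟨v, crossedHom_eq_act_sub_of_apply_one hact (crossedHom_apply_zero hact hf)
    (hσ v ▸ hv)⟩
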